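/- arXiv:1612.09391 — 2 statements merged into one kernel-verified Lean document; each statement's English description precedes it below -/
import Mathlib

section
/- For every integer n ≥ 1 and every λ ∈ K, every short exact sequence of I₁-modules 0 → K[x] → E → M(n,λ) → 0 splits; that is, Ext¹_{I₁}(M(n,λ), K[x]) = 0. -/
open Polynomial

set_option synthInstance.maxHeartbeats 1000000
set_option maxHeartbeats 1000000

/-- Multiplication by `x` on `K[x]`. -/
noncomputable def xOp (K : Type) [Field K] : Module.End K (Polynomial K) :=
  LinearMap.mulLeft K (X : Polynomial K)

/-- Formal derivative `d/dx` on `K[x]`. -/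
noncomputable def derOp (K : Type) [Field K] : Module.End K (Polynomial K) :=
  Polynomial.derivative

/-- Integration on `K[x]`: determined by `x^n ↦ x^(n+1)/(n+1)`. -/
noncomputable def intOp (K : Type) [Field K] [CharZero K] : Module.End K (Polynomial K) :=
  Polynomial.lsum fun n => (((n : K) + 1)⁻¹) • (Polynomial.monomial (n + 1) : K →ₗ[K] Polynomial K)

/-- The algebra `I₁ = K⟨x, d/dx, ∫⟩` of polynomial integro-differential operators. -/
noncomputable def I1 (K : Type) [Field K] [CharZero K] :
    Subalgebra K (Module.End K (Polynomial K)) :=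
  Algebra.adjoin K {xOp K, derOp K, intOp K}

noncomputable instance I1.instRing (K : Type) [Field K] [CharZero K] : Ring (I1 K) :=
  inferInstance
noncomputable instance I1.instAlgebra (K : Type) [Field K] [CharZero K] : Algebra K (I1 K) :=
  inferInstance
noncomputable instance I1.instAddCommGroup (K : Type) [Field K] [CharZero K] :
    AddCommGroup (I1 K) := inferInstance
noncomputable instance I1.instModuleK (K : Type) [Field K] [CharZero K] : Module K (I1 K) :=
  inferInstance

/-- `K[x]` is an `I₁`-module via the inclusion `I₁ ⊆ End_K(K[x])`. -/
noncomputable instance I1.instModulePoly (K : Type) [Field K] [CharZero K] :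
    Module (I1 K) (Polynomial K) :=
  Module.compHom (Polynomial K) (Subalgebra.val (I1 K)).toRingHom

instance I1.instTowerPoly (K : Type) [Field K] [CharZero K] :
    IsScalarTower K (I1 K) (Polynomial K) :=
  ⟨fun c a p => by
    show ((c • a : I1 K) : Module.End K (Polynomial K)) p
        = c • ((a : Module.End K (Polynomial K)) p)
    simp⟩

/-- The element `H = ∂x` of `I₁`. -/
noncomputable def Hop (K : Type) [Field K] [CharZero K] : I1 K :=
  ⟨derOp K * xOp K,
    mul_mem (Algebra.subset_adjoin (by simp)) (Algebra.subset_adjoin (by simp))⟩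

/-- The element `1 - ∫∂` of `I₁`. -/
noncomputable def eElt (K : Type) [Field K] [CharZero K] : I1 K :=
  1 - (⟨intOp K, Algebra.subset_adjoin (by simp)⟩ : I1 K) *
      (⟨derOp K, Algebra.subset_adjoin (by simp)⟩ : I1 K)

/-- The two-sided ideal `F` of `I₁` generated by `1 - ∫∂`, regarded as a left ideal. -/
noncomputable def Fideal (K : Type) [Field K] [CharZero K] : Ideal (I1 K) :=
  Ideal.span {y | ∃ a b : I1 K, y = a * eElt K * b}

/-- The left ideal `F + I₁(H-λ)^n` of `I₁`. -/
noncomputable def Msub (K : Type) [Field K] [CharZero K] (n : ℕ) (lam : K) : Ideal (I1 K) :=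
  Fideal K ⊔ Ideal.span {(Hop K - algebraMap K (I1 K) lam) ^ n}

/-- The left `I₁`-module `M(n,λ) = I₁/(F + I₁(H-λ)^n)`. -/
abbrev Mmod (K : Type) [Field K] [CharZero K] (n : ℕ) (lam : K) :=
  I1 K ⧸ Msub K n lam

section Weight

variable (K : Type) [Field K] [CharZero K]
variable (M : Type) [AddCommGroup M] [Module K M] [Module (I1 K) M] [IsScalarTower K (I1 K) M]

noncomputable instance : SMulCommClass (I1 K) K M := SMulCommClass.symm K (I1 K) M

/-- The generalized weight space `M^λ = {m ∈ M : (H-λ)^k m = 0 for some k}`. -/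
noncomputable def genWeightSpace (lam : K) : Submodule K M :=
  ⨆ k : ℕ,
    LinearMap.ker (DistribMulAction.toLinearMap K M ((Hop K - algebraMap K (I1 K) lam) ^ k))

/-- `M` is a generalized weight module if `M = ⊕_{λ∈K} M^λ`. -/
def IsGenWeightModule : Prop :=
  letI := Classical.decEq K
  DirectSum.IsInternal fun lam : K => genWeightSpace K M lam

/-- The support of `M`: the set of `λ ∈ K` with `M^λ ≠ 0`. -/
noncomputable def suppSet : Set K := {lam : K | genWeightSpace K M lam ≠ ⊥}

end Weight

section Mod

variable (K : Type) [Field K] [CharZero K]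
variable (M : Type) [AddCommGroup M] [Module (I1 K) M]

/-- `M` is indecomposable: it is not the direct sum of two nonzero submodules. -/
def IsIndecomposableMod : Prop :=
  ¬ ∃ N₁ N₂ : Submodule (I1 K) M, N₁ ≠ ⊥ ∧ N₂ ≠ ⊥ ∧ IsCompl N₁ N₂

/-- The submodule `FM` of `M`. -/
noncomputable def FMsub : Submodule (I1 K) M :=
  Submodule.span (I1 K) {m : M | ∃ f ∈ Fideal K, ∃ x : M, m = f • x}

/-- `M` has length `n`: there is a composition series `⊥ = M₀ ⋖ ⋯ ⋖ Mₙ = ⊤`. -/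
def HasLength (n : ℕ) : Prop :=
  ∃ s : CompositionSeries (Submodule (I1 K) M), s.head = ⊥ ∧ s.last = ⊤ ∧ s.length = n

end Mod

/-!
Lift the generator `1` of `M(n,λ)` to some `v ∈ E`; a splitting exists as soon as the lift can be
chosen with `(H - λ)ⁿ v = 0` and `F v = 0`. The elements `(1 - ∫∂)∂ʲ` act on `K[x]` as
`p ↦ j! p_j`, and the elements of `E` killed by all of them form an `I₁`-submodule (it is stable
under `x`, `∂`, `∫`), which is killed by `F`. Since `H` acts on `x^k` by `k + 1`, both conditions
are reached by correcting `v` with polynomials: the only obstruction sits in the degree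
`k = λ - 1`, where `(1 - ∫∂)∂ᵏ(H - λ)ⁿ = 0`.
-/

namespace I1

variable {K : Type} [Field K] [CharZero K]

variable (K) in
noncomputable def xElt : I1 K := ⟨xOp K, Algebra.subset_adjoin (by simp)⟩

variable (K) in
noncomputable def derElt : I1 K := ⟨derOp K, Algebra.subset_adjoin (by simp)⟩

variable (K) in
noncomputable def intElt : I1 K := ⟨intOp K, Algebra.subset_adjoin (by simp)⟩

theorem smul_def (a : I1 K) (p : K[X]) : a • p = (a : Module.End K K[X]) p := rfl

theorem ext {a b : I1 K} (h : ∀ p : K[X], a • p = b • p) : a = b :=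
  Subtype.ext (LinearMap.ext h)

theorem induction {P : I1 K → Prop} (algebraMap : ∀ r, P (algebraMap K (I1 K) r))
    (x : P (xElt K)) (der : P (derElt K)) (int : P (intElt K))
    (add : ∀ a b, P a → P b → P (a + b)) (mul : ∀ a b, P a → P b → P (a * b)) (a : I1 K) :
    P a := by
  obtain ⟨a, ha⟩ := a
  induction ha using Algebra.adjoin_induction with
  | mem u hu =>
    rcases hu with rfl | rfl | rfl
    exacts [x, der, int]
  | algebraMap r => exact algebraMap r
  | add u v _ _ hu hv => exact add _ _ hu hv
  | mul u v _ _ hu hv => exact mul _ _ hu hv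

theorem xElt_smul (p : K[X]) : xElt K • p = X * p := by
  change xOp K p = _
  rw [xOp, LinearMap.mulLeft_apply]

theorem derElt_smul (p : K[X]) : derElt K • p = derivative p := rfl

theorem derElt_pow_smul (j : ℕ) (p : K[X]) : derElt K ^ j • p = derivative^[j] p := by
  induction j with
  | zero => simp
  | succ j ih => rw [pow_succ', mul_smul, ih, derElt_smul, Function.iterate_succ_apply']

theorem intElt_smul_monomial (k : ℕ) (c : K) :
    intElt K • monomial k c = monomial (k + 1) (((k : K) + 1)⁻¹ * c) := by
  simp [smul_def, intElt, intOp, smul_monomial]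

theorem Hop_smul_coeff (p : K[X]) (k : ℕ) : (Hop K • p).coeff k = ((k : K) + 1) * p.coeff k := by
  change ((derOp K * xOp K) p).coeff k = _
  rw [Module.End.mul_apply, xOp, LinearMap.mulLeft_apply, derOp, coeff_derivative, coeff_X_mul,
    mul_comm]

theorem Hpow_smul_coeff (lam : K) (n : ℕ) (p : K[X]) (k : ℕ) :
    ((Hop K - algebraMap K (I1 K) lam) ^ n • p).coeff k = ((k : K) + 1 - lam) ^ n * p.coeff k := by
  induction n generalizing p with
  | zero => simp
  | succ n ih =>
    rw [pow_succ, mul_smul, ih, show (Hop K - algebraMap K (I1 K) lam) • p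
      = Hop K • p - algebraMap K (I1 K) lam • p from sub_smul _ _ _, coeff_sub, Hop_smul_coeff,
      show algebraMap K (I1 K) lam • p = lam • p from rfl,
      coeff_smul, smul_eq_mul]
    ring

theorem eElt_smul (p : K[X]) : eElt K • p = C (p.coeff 0) := by
  induction p using Polynomial.induction_on' with
  | add p q hp hq => rw [smul_add, hp, hq, coeff_add, C_add]
  | monomial k c =>
    rw [show eElt K • monomial k c = monomial k c - intElt K • derElt K • monomial k c from rfl,
      derElt_smul, derivative_monomial]
    cases k with
    | zero => simp
    | succ k =>
      have hk : ((k : K) + 1) ≠ 0 := Nat.cast_add_one_ne_zero k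
      rw [Nat.add_sub_cancel, intElt_smul_monomial, coeff_monomial_succ, C_0, sub_eq_zero]
      congr 1
      push_cast
      field_simp

theorem derElt_mul_intElt : derElt K * intElt K = 1 := by
  refine ext fun p => ?_
  induction p using Polynomial.induction_on' with
  | add p q hp hq => rw [smul_add, hp, hq, smul_add]
  | monomial k c =>
    have hk : ((k : K) + 1) ≠ 0 := Nat.cast_add_one_ne_zero k
    rw [mul_smul, intElt_smul_monomial, derElt_smul, derivative_monomial, Nat.add_sub_cancel,
      one_smul]
    congr 1
    push_cast
    field_simp

theorem eElt_mul_eElt : eElt K * eElt K = eElt K :=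
  ext fun p => by rw [mul_smul, eElt_smul, eElt_smul, coeff_C_zero]

theorem eElt_mul_xElt : eElt K * xElt K = 0 :=
  ext fun p => by rw [mul_smul, eElt_smul, xElt_smul, coeff_X_mul_zero, C_0, zero_smul]

theorem eElt_mul_intElt : eElt K * intElt K = 0 := by
  refine ext fun p => ?_
  induction p using Polynomial.induction_on' with
  | add p q hp hq => rw [smul_add, hp, hq, smul_add]
  | monomial k c => rw [mul_smul, intElt_smul_monomial, eElt_smul, zero_smul]; simp

variable (K) in
noncomputable def coeffElt (j : ℕ) : I1 K := eElt K * derElt K ^ j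

theorem coeffElt_smul (j : ℕ) (p : K[X]) :
    coeffElt K j • p = C ((j.factorial : K) * p.coeff j) := by
  rw [coeffElt, mul_smul, derElt_pow_smul, eElt_smul, coeff_iterate_derivative, zero_add,
    Nat.descFactorial_self, nsmul_eq_mul]

theorem coeffElt_zero : coeffElt K 0 = eElt K := by rw [coeffElt, pow_zero, mul_one]

theorem eElt_mul_coeffElt (j : ℕ) : eElt K * coeffElt K j = coeffElt K j := by
  rw [coeffElt, ← mul_assoc, eElt_mul_eElt]

theorem coeffElt_mul_derElt (j : ℕ) : coeffElt K j * derElt K = coeffElt K (j + 1) := by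
  rw [coeffElt, coeffElt, mul_assoc, pow_succ]

theorem coeffElt_succ_mul_intElt (j : ℕ) : coeffElt K (j + 1) * intElt K = coeffElt K j := by
  rw [← coeffElt_mul_derElt, mul_assoc, derElt_mul_intElt, mul_one]

theorem coeffElt_succ_mul_xElt (j : ℕ) :
    coeffElt K (j + 1) * xElt K = ((j : K) + 1) • coeffElt K j := by
  refine ext fun p => ?_
  rw [mul_smul, smul_assoc, coeffElt_smul, coeffElt_smul, xElt_smul, coeff_X_mul, smul_C,
    Nat.factorial_succ, smul_eq_mul]
  congr 1
  push_cast
  ring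

theorem coeffElt_mul_Hpow (lam : K) (n j : ℕ) :
    coeffElt K j * (Hop K - algebraMap K (I1 K) lam) ^ n
      = ((j : K) + 1 - lam) ^ n • coeffElt K j := by
  refine ext fun p => ?_
  rw [mul_smul, smul_assoc, coeffElt_smul, coeffElt_smul, Hpow_smul_coeff, smul_C, smul_eq_mul]
  congr 1
  ring

end I1

open I1

section Extension

variable {K : Type} [Field K] [CharZero K]

theorem exists_Hpow_smul_eq {lam : K} (n : ℕ) {q : K[X]}
    (hq : ∀ k : ℕ, (k : K) + 1 = lam → q.coeff k = 0) :
    ∃ p : K[X], (Hop K - algebraMap K (I1 K) lam) ^ n • p = q := by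
  classical
  refine ⟨∑ k ∈ q.support, monomial k ((((k : K) + 1 - lam) ^ n)⁻¹ * q.coeff k), ?_⟩
  ext k
  rw [Hpow_smul_coeff, finsetSum_coeff]
  simp only [coeff_monomial, Finset.sum_ite_eq', mem_support_iff]
  by_cases hk : (k : K) + 1 = lam
  · simp [hq k hk]
  · have : ((k : K) + 1 - lam) ^ n ≠ 0 := pow_ne_zero _ (sub_ne_zero.2 hk)
    split_ifs with h
    · field_simp
    · push Not at h; simp [h]

variable (K) (E : Type) [AddCommGroup E] [Module (I1 K) E]

theorem coeffElt_smul_smul_eq_zero (a : I1 K) {v : E} (hv : ∀ j, coeffElt K j • v = 0) (j : ℕ) :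
    coeffElt K j • a • v = 0 := by
  induction a using I1.induction generalizing v j with
  | algebraMap r =>
    rw [← mul_smul, ← Algebra.commutes, mul_smul, hv, smul_zero]
  | x =>
    rcases j with _ | j
    · rw [← mul_smul, coeffElt_zero, eElt_mul_xElt, zero_smul]
    · rw [← mul_smul, coeffElt_succ_mul_xElt, Algebra.smul_def, mul_smul, hv, smul_zero]
  | der =>
    rw [← mul_smul, coeffElt_mul_derElt, hv]
  | int =>
    rcases j with _ | j
    · rw [← mul_smul, coeffElt_zero, eElt_mul_intElt, zero_smul]
    · rw [← mul_smul, coeffElt_succ_mul_intElt, hv]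
  | add a b ha hb => rw [add_smul, smul_add, ha hv, hb hv, add_zero]
  | mul a b ha hb => rw [mul_smul]; exact ha (hb hv) j

noncomputable def coeffEltKer : Submodule (I1 K) E where
  carrier := {v | ∀ j, coeffElt K j • v = 0}
  add_mem' hv hw j := by rw [smul_add, hv j, hw j, add_zero]
  zero_mem' j := smul_zero _
  smul_mem' a _ hv := coeffElt_smul_smul_eq_zero K E a hv

variable {K E}

theorem Fideal_smul_eq_zero {v : E} (hv : v ∈ coeffEltKer K E) {a : I1 K} (ha : a ∈ Fideal K) :
    a • v = 0 := by
  induction ha using Submodule.span_induction with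
  | mem a ha =>
    obtain ⟨b, c, rfl⟩ := ha
    rw [mul_smul, mul_smul, ← coeffElt_zero, (coeffEltKer K E).smul_mem c hv 0, smul_zero]
  | zero => exact zero_smul _ _
  | add a b _ _ ha hb => rw [add_smul, ha, hb, add_zero]
  | smul b a _ ha => rw [smul_eq_mul, mul_smul, ha, smul_zero]

theorem coeffElt_mem_Fideal (j : ℕ) : coeffElt K j ∈ Fideal K :=
  Submodule.subset_span ⟨1, derElt K ^ j, by rw [one_mul, coeffElt]⟩

theorem Msub_le_ker_toSpanSingleton {n : ℕ} {lam : K} {v : E}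
    (hH : (Hop K - algebraMap K (I1 K) lam) ^ n • v = 0) (hv : v ∈ coeffEltKer K E) :
    Msub K n lam ≤ LinearMap.ker (LinearMap.toSpanSingleton (I1 K) E v) :=
  sup_le (fun _ ha => Fideal_smul_eq_zero hv ha)
    ((Submodule.span_singleton_le_iff_mem _ _).2 hH)

variable {f : K[X] →ₗ[I1 K] E} {n : ℕ} {lam : K}

theorem exists_Hpow_smul_sub_eq_zero (hf : Function.Injective f) (hn : n ≠ 0) {v : E}
    (hv : (Hop K - algebraMap K (I1 K) lam) ^ n • v ∈ LinearMap.range f) :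
    ∃ p : K[X], (Hop K - algebraMap K (I1 K) lam) ^ n • (v - f p) = 0 := by
  obtain ⟨q, hq⟩ := hv
  have hcoeff (k : ℕ) (hk : (k : K) + 1 = lam) : q.coeff k = 0 := by
    have h0 : coeffElt K k • q = 0 := hf <| by
      rw [map_smul, hq, ← mul_smul, coeffElt_mul_Hpow, hk, sub_self, zero_pow hn, zero_smul,
        zero_smul, map_zero]
    rw [coeffElt_smul, C_eq_zero, mul_eq_zero] at h0
    exact h0.resolve_left (Nat.cast_ne_zero.2 k.factorial_ne_zero)
  obtain ⟨p, hp⟩ := exists_Hpow_smul_eq n hcoeff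
  exact ⟨p, by rw [smul_sub, ← map_smul, hp, hq, sub_self]⟩

/-- Away from `k + 1 = λ`, `coeffElt K k` factors through `(H - λ)ⁿ`; at `k + 1 = λ` the
obstruction is a constant, which is corrected by a multiple of `x^k`. -/
theorem exists_sub_mem_coeffEltKer (hf : Function.Injective f) (hn : n ≠ 0) {v : E}
    (hH : (Hop K - algebraMap K (I1 K) lam) ^ n • v = 0)
    (hv : ∀ j, coeffElt K j • v ∈ LinearMap.range f) :
    ∃ t : K[X], (Hop K - algebraMap K (I1 K) lam) ^ n • (v - f t) = 0 ∧
      v - f t ∈ coeffEltKer K E := by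
  have hfar (j : ℕ) (hj : (j : K) + 1 ≠ lam) : coeffElt K j • v = 0 := by
    have hc : ((j : K) + 1 - lam) ^ n ≠ 0 := pow_ne_zero _ (sub_ne_zero.2 hj)
    rw [← inv_smul_smul₀ hc (coeffElt K j), ← coeffElt_mul_Hpow, Algebra.smul_def, mul_smul,
      mul_smul, hH, smul_zero, smul_zero]
  by_cases hlam : ∃ j₀ : ℕ, (j₀ : K) + 1 = lam
  swap
  · push Not at hlam
    exact ⟨0, by rw [map_zero, sub_zero]; exact ⟨hH, fun j => hfar j (hlam j)⟩⟩
  obtain ⟨j₀, rfl⟩ := hlam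
  obtain ⟨s, hs⟩ := hv j₀
  have hs_const : C (s.coeff 0) = s := by
    apply hf
    rw [← eElt_smul, map_smul, hs, ← mul_smul, eElt_mul_coeffElt]
  refine ⟨monomial j₀ (s.coeff 0 / j₀.factorial), ?_, fun j => ?_⟩
  · have : (Hop K - algebraMap K (I1 K) ((j₀ : K) + 1)) ^ n •
        monomial j₀ (s.coeff 0 / j₀.factorial) = 0 := by
      ext k
      rw [Hpow_smul_coeff, coeff_monomial, coeff_zero]
      split_ifs with h
      · rw [h, sub_self, zero_pow hn, zero_mul]
      · rw [mul_zero]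
    rw [smul_sub, hH, ← map_smul, this, map_zero, sub_zero]
  · rw [smul_sub, ← map_smul, coeffElt_smul, coeff_monomial]
    by_cases hj : j₀ = j
    · subst hj
      rw [if_pos rfl, mul_div_cancel₀ _ (Nat.cast_ne_zero.2 j₀.factorial_ne_zero), hs_const, hs,
        sub_self]
    · rw [if_neg hj, mul_zero, C_0, map_zero, sub_zero,
        hfar j fun h => hj (by exact_mod_cast (add_right_cancel h).symm)]

end Extension

/-- For every integer `n ≥ 1` and every `λ ∈ K`, every short exact sequence of
`I₁`-modules `0 → K[x] → E → M(n,λ) → 0` splits; that is, `Ext¹(M(n,λ), K[x]) = 0`. -/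
theorem stmt_8 (K : Type) [Field K] [CharZero K] (n : ℕ) (hn : 1 ≤ n) (lam : K)
    (E : Type) [AddCommGroup E] [Module (I1 K) E]
    (f : Polynomial K →ₗ[I1 K] E) (g : E →ₗ[I1 K] Mmod K n lam)
    (hf : Function.Injective f) (hg : Function.Surjective g)
    (hfg : LinearMap.range f = LinearMap.ker g) :
    ∃ h : Mmod K n lam →ₗ[I1 K] E, g.comp h = LinearMap.id := by
  have hn0 : n ≠ 0 := Nat.one_le_iff_ne_zero.mp hn
  have hgf (p : K[X]) : g (f p) = 0 := by
    rw [← LinearMap.mem_ker, ← hfg]; exact LinearMap.mem_range_self f p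
  have hrange {w : E} (hw : g w = Submodule.Quotient.mk 1) {a : I1 K} (ha : a ∈ Msub K n lam) :
      a • w ∈ LinearMap.range f := by
    rw [hfg, LinearMap.mem_ker, map_smul, hw, ← Submodule.Quotient.mk_smul, smul_eq_mul, mul_one,
      Submodule.Quotient.mk_eq_zero]
    exact ha
  obtain ⟨v, hv⟩ := hg (Submodule.Quotient.mk 1)
  obtain ⟨p, hp⟩ := exists_Hpow_smul_sub_eq_zero hf hn0
    (hrange hv (Submodule.mem_sup_right (Submodule.mem_span_singleton_self _)))
  have hvp : g (v - f p) = Submodule.Quotient.mk 1 := by rw [map_sub, hv, hgf, sub_zero]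
  obtain ⟨t, hH, hker⟩ := exists_sub_mem_coeffEltKer hf hn0 hp fun j =>
    hrange hvp (Submodule.mem_sup_left (coeffElt_mem_Fideal j))
  refine ⟨(Msub K n lam).liftQ _ (Msub_le_ker_toSpanSingleton hH hker),
    Submodule.linearMap_qext _ (LinearMap.ext_ring ?_)⟩
  simp [hvp, hgf]
end

section
/- Let n ≥ 1 be an integer and λ ∈ K with λ ∉ {1, 2, 3, ...}. Then: (a) F·(H−λ)^n = F, i.e., the image of F under right multiplication by (H−λ)^n equals F; (b) F ⊆ I₁(H−λ)^n, and hence M(n,λ) ≅ I₁/I₁(H−λ)^n as left I₁-modules; (c) right multiplication by (H−λ)^n is an injective map I₁ → I₁, so it gives an isomorphism of left I₁-modules I₁ → I₁(H−λ)^n. -/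
open Polynomial

set_option synthInstance.maxHeartbeats 1000000
set_option maxHeartbeats 1000000

/-!
The left ideal `F` is generated by the elements `a e b` with `e = 1 - ∫∂`. The right ideal `e I₁`
is spanned over `K` by the `e ∂^j`, since that span is stable under right multiplication by `x`,
`∂` and `∫`. These are eigenvectors of right multiplication by `H`: `eH = e` and `∂H = (H + 1)∂`
give `e ∂^j (H - λ)^n = (j + 1 - λ)^n e ∂^j`, a nonzero multiple as `λ ∉ {1, 2, ...}`. Hence
every `a e b` equals `a' (H - λ)^n` with `a' ∈ F`, which gives `F (H - λ)^n = F ⊆ I₁ (H - λ)^n`.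
Injectivity of right multiplication holds because `(H - λ)^n` acts on `K[x]` diagonally,
`x^m ↦ (m + 1 - λ)^n x^m`, hence surjectively.
-/

section RingLemmas

variable {A : Type*} [Ring A]

theorem pow_succ_mul_of_mul_eq_mul_add_one {d x : A} (h : d * x = x * d + 1) (j : ℕ) :
    d ^ (j + 1) * x = x * d ^ (j + 1) + (j + 1 : ℕ) • d ^ j := by
  induction j with
  | zero => simpa using h
  | succ j ih =>
    rw [pow_succ', mul_assoc, ih, mul_add, ← mul_assoc, h, mul_smul_comm, ← pow_succ',
      succ_nsmul _ (j + 1), add_mul, one_mul, mul_assoc, ← pow_succ']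
    abel

theorem pow_mul_of_mul_eq_add_one_mul {d h : A} (hdh : d * h = (h + 1) * d) (j : ℕ) :
    d ^ j * h = (h + j) * d ^ j := by
  induction j with
  | zero => simp
  | succ j ih =>
    rw [pow_succ, mul_assoc, hdh, ← mul_assoc, mul_add, ih, mul_one, add_mul, mul_assoc,
      ← pow_succ]
    push_cast
    noncomm_ring

variable {K : Type*} [CommRing K] [Algebra K A]

theorem mul_pow_of_mul_eq_smul {v t : A} {c : K} (h : v * t = c • v) (n : ℕ) :
    v * t ^ n = c ^ n • v := by
  induction n with
  | zero => simp
  | succ n ih => rw [pow_succ, ← mul_assoc, ih, smul_mul_assoc, h, smul_smul, pow_succ]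

theorem mul_pow_mul_sub_algebraMap_pow {e d h : A} (he : e * h = e) (hdh : d * h = (h + 1) * d)
    (c : K) (j n : ℕ) :
    e * d ^ j * (h - algebraMap K A c) ^ n = ((j + 1 - c) ^ n) • (e * d ^ j) := by
  have hH : e * d ^ j * h = ((j : K) + 1) • (e * d ^ j) := by
    rw [mul_assoc, pow_mul_of_mul_eq_add_one_mul hdh, ← mul_assoc, mul_add, he, ← Nat.cast_comm,
      add_mul, mul_assoc, add_smul, one_smul, Nat.cast_smul_eq_nsmul, nsmul_eq_mul, add_comm]
  refine mul_pow_of_mul_eq_smul ?_ n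
  rw [mul_sub, hH, Algebra.algebraMap_eq_smul_one, mul_smul_comm, mul_one, sub_smul]

end RingLemmas

theorem Ideal.isTwoSided_span_of_mul_mem {R : Type*} [Semiring R] {s : Set R}
    (hs : ∀ a ∈ s, ∀ b, a * b ∈ s) : (Ideal.span s).IsTwoSided where
  mul_mem_of_left b ha := by
    induction ha using Submodule.span_induction with
    | mem a ha => exact Ideal.subset_span (hs a ha b)
    | zero => simp
    | add a c _ _ ha hc => simpa only [add_mul] using add_mem ha hc
    | smul r a _ ha => simpa only [smul_eq_mul, mul_assoc] using Ideal.mul_mem_left _ r ha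

theorem Algebra.mul_mem_of_forall_mul_generator_mem {R A : Type*} [CommSemiring R] [Semiring A]
    [Algebra R A] {s : Set A} {V : Submodule R (Algebra.adjoin R s)}
    (hV : ∀ t (ht : t ∈ s), ∀ v ∈ V, v * ⟨t, Algebra.subset_adjoin ht⟩ ∈ V)
    {v : Algebra.adjoin R s} (hv : v ∈ V) (b : Algebra.adjoin R s) : v * b ∈ V := by
  obtain ⟨b, hb⟩ := b
  induction hb using Algebra.adjoin_induction generalizing v with
  | mem t ht => exact hV t ht v hv
  | algebraMap r =>
    change v * algebraMap R _ r ∈ V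
    rw [Algebra.algebraMap_eq_smul_one, mul_smul_comm, mul_one]
    exact V.smul_mem r hv
  | add b c hb hc ihb ihc =>
    change v * (⟨b, hb⟩ + ⟨c, hc⟩) ∈ V
    rw [mul_add]
    exact V.add_mem (ihb hv) (ihc hv)
  | mul b c hb hc ihb ihc =>
    change v * (⟨b, hb⟩ * ⟨c, hc⟩) ∈ V
    rw [← mul_assoc]
    exact ihc (ihb hv)

theorem Subalgebra.mul_left_injective_of_surjective {R M : Type*} [CommSemiring R]
    [AddCommMonoid M] [Module R M] {S : Subalgebra R (Module.End R M)} {g : S}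
    (hg : Function.Surjective (g : Module.End R M)) : Function.Injective fun a : S => a * g := by
  intro a b hab
  exact Subtype.ext <| LinearMap.coe_injective <| hg.injective_comp_right <|
    congrArg (fun c : S => ⇑(c : Module.End R M)) hab

namespace I1

variable (K : Type) [Field K]

@[simp]
theorem xOp_monomial (m : ℕ) (a : K) : xOp K (monomial m a) = monomial (m + 1) a := by
  simp [xOp, X_mul_monomial]

@[simp]
theorem derOp_monomial (m : ℕ) (a : K) : derOp K (monomial m a) = monomial (m - 1) (a * m) :=
  derivative_monomial a m

theorem derOp_mul_xOp : derOp K * xOp K = xOp K * derOp K + 1 :=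
  LinearMap.ext fun p => by simp [xOp, derOp, derivative_mul, add_comm]

variable [CharZero K]

@[simp]
theorem intOp_monomial (m : ℕ) (a : K) :
    intOp K (monomial m a) = ((m : K) + 1)⁻¹ • monomial (m + 1) a := by
  simp [intOp, Polynomial.lsum_apply, Polynomial.sum_monomial_index]

theorem derOp_mul_intOp : derOp K * intOp K = 1 := by
  refine Polynomial.lhom_ext' fun m => LinearMap.ext fun a => ?_
  have hm : (m : K) + 1 ≠ 0 := Nat.cast_add_one_ne_zero m
  simp [smul_monomial]
  field_simp

theorem intOp_derOp_monomial_succ (m : ℕ) (a : K) :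
    intOp K (derOp K (monomial (m + 1) a)) = monomial (m + 1) a := by
  have hm : (m : K) + 1 ≠ 0 := Nat.cast_add_one_ne_zero m
  simp [smul_monomial]
  field_simp

theorem one_sub_intOp_mul_derOp_mul_xOp : (1 - intOp K * derOp K) * xOp K = 0 := by
  refine Polynomial.lhom_ext' fun m => LinearMap.ext fun a => ?_
  simp only [LinearMap.comp_apply, Module.End.mul_apply, LinearMap.sub_apply,
    Module.End.one_apply, xOp_monomial, intOp_derOp_monomial_succ, sub_self,
    LinearMap.zero_apply]

theorem one_sub_intOp_mul_derOp_mul_intOp : (1 - intOp K * derOp K) * intOp K = 0 := by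
  refine Polynomial.lhom_ext' fun m => LinearMap.ext fun a => ?_
  simp only [LinearMap.comp_apply, Module.End.mul_apply, LinearMap.sub_apply,
    Module.End.one_apply, intOp_monomial, map_smul, intOp_derOp_monomial_succ, sub_self, smul_zero,
    LinearMap.zero_apply]

theorem Hop_sub_algebraMap_apply_monomial (lam : K) (m : ℕ) (a : K) :
    ((Hop K - algebraMap K (I1 K) lam : I1 K) : Module.End K K[X]) (monomial m a)
      = ((m : K) + 1 - lam) • monomial m a := by
  change (derOp K * xOp K - algebraMap K _ lam) (monomial m a) = _
  simp only [LinearMap.sub_apply, Module.End.mul_apply, xOp_monomial, derOp_monomial,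
    Module.algebraMap_end_apply, smul_monomial, Nat.add_sub_cancel, ← map_sub]
  congr 1
  push_cast
  ring

theorem Hop_sub_algebraMap_pow_surjective {lam : K} (hlam : ∀ j : ℕ, (j : K) + 1 - lam ≠ 0)
    (n : ℕ) :
    Function.Surjective (((Hop K - algebraMap K (I1 K) lam) ^ n : I1 K) : Module.End K K[X]) := by
  rw [SubmonoidClass.coe_pow, Module.End.coe_pow]
  refine Function.Surjective.iterate (fun p => ?_) n
  induction p using Polynomial.induction_on' with
  | add p q hp hq =>
    obtain ⟨p', rfl⟩ := hp
    obtain ⟨q', rfl⟩ := hq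
    exact ⟨p' + q', map_add _ p' q'⟩
  | monomial m a =>
    refine ⟨((m : K) + 1 - lam)⁻¹ • monomial m a, ?_⟩
    rw [map_smul, Hop_sub_algebraMap_apply_monomial, smul_smul, inv_mul_cancel₀ (hlam m),
      one_smul]

noncomputable def mulX : I1 K := ⟨xOp K, Algebra.subset_adjoin (by simp)⟩

noncomputable def der : I1 K := ⟨derOp K, Algebra.subset_adjoin (by simp)⟩

noncomputable def integ : I1 K := ⟨intOp K, Algebra.subset_adjoin (by simp)⟩

theorem der_mul_integ : der K * integ K = 1 := Subtype.ext (derOp_mul_intOp K)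

theorem der_mul_mulX : der K * mulX K = mulX K * der K + 1 := Subtype.ext (derOp_mul_xOp K)

theorem eElt_mul_mulX : eElt K * mulX K = 0 := Subtype.ext (one_sub_intOp_mul_derOp_mul_xOp K)

theorem eElt_mul_integ : eElt K * integ K = 0 :=
  Subtype.ext (one_sub_intOp_mul_derOp_mul_intOp K)

theorem eElt_mul_Hop : eElt K * Hop K = eElt K := by
  change eElt K * (der K * mulX K) = eElt K
  rw [der_mul_mulX, mul_add, ← mul_assoc, eElt_mul_mulX, zero_mul, zero_add, mul_one]

theorem der_mul_Hop : der K * Hop K = (Hop K + 1) * der K := by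
  change der K * (der K * mulX K) = (der K * mulX K + 1) * der K
  conv_lhs => rw [der_mul_mulX]
  rw [mul_add, ← mul_assoc, mul_one, add_mul, one_mul]

theorem eElt_mul_der_pow_mul_pow (lam : K) (j n : ℕ) :
    eElt K * der K ^ j * (Hop K - algebraMap K (I1 K) lam) ^ n
      = ((j + 1 - lam) ^ n) • (eElt K * der K ^ j) :=
  mul_pow_mul_sub_algebraMap_pow (eElt_mul_Hop K) (der_mul_Hop K) lam j n

noncomputable def eDerPowSpan : Submodule K (I1 K) :=
  Submodule.span K (Set.range fun j : ℕ => eElt K * der K ^ j)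

variable {K} in
theorem mul_mem_eDerPowSpan_of_forall {t : I1 K}
    (ht : ∀ j : ℕ, eElt K * der K ^ j * t ∈ eDerPowSpan K) {v : I1 K} (hv : v ∈ eDerPowSpan K) :
    v * t ∈ eDerPowSpan K := by
  induction hv using Submodule.span_induction with
  | mem y hy => obtain ⟨j, rfl⟩ := hy; exact ht j
  | zero => rw [zero_mul]; exact zero_mem _
  | add a b _ _ ha hb => rw [add_mul]; exact add_mem ha hb
  | smul c a _ ha => rw [smul_mul_assoc]; exact Submodule.smul_mem _ c ha

theorem eElt_mul_der_pow_mem (j : ℕ) : eElt K * der K ^ j ∈ eDerPowSpan K :=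
  Submodule.subset_span ⟨j, rfl⟩

theorem eElt_mul_der_pow_mul_mulX_mem (j : ℕ) : eElt K * der K ^ j * mulX K ∈ eDerPowSpan K := by
  cases j with
  | zero => simp [eElt_mul_mulX]
  | succ j =>
    rw [mul_assoc, pow_succ_mul_of_mul_eq_mul_add_one (der_mul_mulX K), mul_add, ← mul_assoc,
      eElt_mul_mulX, zero_mul, zero_add, mul_smul_comm]
    exact Submodule.smul_of_tower_mem _ _ (eElt_mul_der_pow_mem K j)

theorem eElt_mul_der_pow_mul_integ_mem (j : ℕ) :
    eElt K * der K ^ j * integ K ∈ eDerPowSpan K := by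
  cases j with
  | zero => simp [eElt_mul_integ]
  | succ j =>
    rw [mul_assoc, pow_succ, mul_assoc, der_mul_integ, mul_one]
    exact eElt_mul_der_pow_mem K j

theorem mul_mem_eDerPowSpan {v : I1 K} (hv : v ∈ eDerPowSpan K) (b : I1 K) :
    v * b ∈ eDerPowSpan K := by
  refine Algebra.mul_mem_of_forall_mul_generator_mem ?_ hv b
  rintro t (rfl | rfl | rfl) w hw
  · exact mul_mem_eDerPowSpan_of_forall (eElt_mul_der_pow_mul_mulX_mem K) hw
  · refine mul_mem_eDerPowSpan_of_forall (fun j => ?_) hw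
    change eElt K * der K ^ j * der K ∈ _
    rw [mul_assoc, ← pow_succ]
    exact eElt_mul_der_pow_mem K (j + 1)
  · exact mul_mem_eDerPowSpan_of_forall (eElt_mul_der_pow_mul_integ_mem K) hw

theorem eElt_mul_mem_eDerPowSpan (b : I1 K) : eElt K * b ∈ eDerPowSpan K :=
  mul_mem_eDerPowSpan K (by simpa using eElt_mul_der_pow_mem K 0) b

variable {K}

instance : (Fideal K).IsTwoSided :=
  Ideal.isTwoSided_span_of_mul_mem <| by
    rintro _ ⟨a, b, rfl⟩ c
    exact ⟨a, b * c, by rw [mul_assoc]⟩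

theorem eDerPowSpan_le_Fideal_map_mul_right {lam : K} (hlam : ∀ j : ℕ, (j : K) + 1 - lam ≠ 0)
    (n : ℕ) :
    eDerPowSpan K ≤ (Submodule.map (LinearMap.toSpanSingleton (I1 K) (I1 K)
      ((Hop K - algebraMap K (I1 K) lam) ^ n)) (Fideal K)).restrictScalars K := by
  refine Submodule.span_le.mpr ?_
  rintro _ ⟨j, rfl⟩
  have hmem : eElt K * der K ^ j ∈ Fideal K := Ideal.subset_span ⟨1, der K ^ j, by rw [one_mul]⟩
  refine ⟨(((j : K) + 1 - lam) ^ n)⁻¹ • (eElt K * der K ^ j),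
    Submodule.smul_of_tower_mem _ _ hmem, ?_⟩
  rw [LinearMap.toSpanSingleton_apply, smul_eq_mul, smul_mul_assoc, eElt_mul_der_pow_mul_pow,
    smul_smul, inv_mul_cancel₀ (pow_ne_zero n (hlam j)), one_smul]

theorem Fideal_map_mul_right {lam : K} (hlam : ∀ j : ℕ, (j : K) + 1 - lam ≠ 0) (n : ℕ) :
    Submodule.map (LinearMap.toSpanSingleton (I1 K) (I1 K)
      ((Hop K - algebraMap K (I1 K) lam) ^ n)) (Fideal K) = Fideal K := by
  refine le_antisymm (Submodule.map_le_iff_le_comap.mpr fun f hf => ?_) ?_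
  · exact Ideal.mul_mem_right _ _ hf
  · refine Ideal.span_le.mpr ?_
    rintro _ ⟨a, b, rfl⟩
    rw [mul_assoc]
    exact Submodule.smul_mem _ a
      (eDerPowSpan_le_Fideal_map_mul_right hlam n (eElt_mul_mem_eDerPowSpan K b))

end I1

theorem stmt_19_general (K : Type) [Field K] [CharZero K] (n : ℕ) (lam : K)
    (hlam : ∀ m : ℕ, 1 ≤ m → lam ≠ (m : K)) :
    ((fun f : I1 K => f * (Hop K - algebraMap K (I1 K) lam) ^ n) '' (Fideal K : Set (I1 K))
        = (Fideal K : Set (I1 K))) ∧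
    ((Fideal K : Set (I1 K)) ⊆
        ((Ideal.span {(Hop K - algebraMap K (I1 K) lam) ^ n} : Ideal (I1 K)) : Set (I1 K))) ∧
    Nonempty (Mmod K n lam ≃ₗ[I1 K]
        (I1 K ⧸ (Ideal.span {(Hop K - algebraMap K (I1 K) lam) ^ n} : Ideal (I1 K)))) ∧
    Function.Injective (fun a : I1 K => a * (Hop K - algebraMap K (I1 K) lam) ^ n) ∧
    ∃ e : I1 K ≃ₗ[I1 K] (Ideal.span {(Hop K - algebraMap K (I1 K) lam) ^ n} : Ideal (I1 K)),
      ∀ a : I1 K, (e a : I1 K) = a * (Hop K - algebraMap K (I1 K) lam) ^ n := by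
  set g := (Hop K - algebraMap K (I1 K) lam) ^ n
  have hroot : ∀ j : ℕ, (j : K) + 1 - lam ≠ 0 := fun j h =>
    hlam (j + 1) j.succ_pos (by push_cast; exact (sub_eq_zero.mp h).symm)
  have hmap := I1.Fideal_map_mul_right hroot n
  have hrange : Ideal.span {g} = LinearMap.range (LinearMap.toSpanSingleton (I1 K) (I1 K) g) :=
    LinearMap.span_singleton_eq_range (I1 K) (I1 K) g
  have hF : Fideal K ≤ Ideal.span {g} := hmap ▸ hrange ▸ LinearMap.map_le_range
  have hinj : Function.Injective fun a : I1 K => a * g :=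
    Subalgebra.mul_left_injective_of_surjective (I1.Hop_sub_algebraMap_pow_surjective K hroot n)
  refine ⟨?_, hF, ⟨Submodule.quotEquivOfEq _ _ (sup_eq_right.mpr hF)⟩, hinj,
    (LinearEquiv.ofInjective _ hinj).trans (LinearEquiv.ofEq _ _ hrange.symm), fun a => rfl⟩
  conv_rhs => rw [← hmap, Submodule.map_coe]
  rfl

/-- Let `n ≥ 1` and `λ ∈ K` with `λ ∉ {1, 2, 3, ...}`. Then
(a) `F·(H-λ)^n = F`; (b) `F ⊆ I₁(H-λ)^n`, hence `M(n,λ) ≅ I₁/I₁(H-λ)^n`;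
(c) right multiplication by `(H-λ)^n` is injective on `I₁`, giving an isomorphism of left
`I₁`-modules `I₁ ≅ I₁(H-λ)^n`. -/
theorem stmt_19 (K : Type) [Field K] [CharZero K] (n : ℕ) (hn : 1 ≤ n) (lam : K)
    (hlam : ∀ m : ℕ, 1 ≤ m → lam ≠ (m : K)) :
    ((fun f : I1 K => f * (Hop K - algebraMap K (I1 K) lam) ^ n) '' (Fideal K : Set (I1 K))
        = (Fideal K : Set (I1 K))) ∧
    ((Fideal K : Set (I1 K)) ⊆
        ((Ideal.span {(Hop K - algebraMap K (I1 K) lam) ^ n} : Ideal (I1 K)) : Set (I1 K))) ∧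
    Nonempty (Mmod K n lam ≃ₗ[I1 K]
        (I1 K ⧸ (Ideal.span {(Hop K - algebraMap K (I1 K) lam) ^ n} : Ideal (I1 K)))) ∧
    Function.Injective (fun a : I1 K => a * (Hop K - algebraMap K (I1 K) lam) ^ n) ∧
    ∃ e : I1 K ≃ₗ[I1 K] (Ideal.span {(Hop K - algebraMap K (I1 K) lam) ^ n} : Ideal (I1 K)),
      ∀ a : I1 K, (e a : I1 K) = a * (Hop K - algebraMap K (I1 K) lam) ^ n :=
  stmt_19_general K n lam hlam
end
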